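/- arXiv:2007.03116 — 5 statements merged into one kernel-verified Lean document; each statement's English description precedes it below -/
import Mathlib

section
/- Let E be a vector space over ℂ, let λ, μ ∈ ℂ with λ ≠ 0, and let A, B : E → E be linear endomorphisms satisfying A∘B = λ⁻¹ • (B∘A). Then for all i, j ∈ ℕ, (A - μ•id)^i ∘ B^j = λ^{-ij} • (B^j ∘ (A - λ^j μ • id)^i). -/
/-- If `A ∘ B = λ⁻¹ • (B ∘ A)` for endomorphisms of a complex vector space with `λ ≠ 0`, then
`(A - μ•id)^i ∘ B^j = λ^(-ij) • (B^j ∘ (A - λ^j μ • id)^i)`. -/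
theorem stmt_1 {E : Type*} [AddCommGroup E] [Module ℂ E]
    (l μ : ℂ) (hl : l ≠ 0) (A B : Module.End ℂ E)
    (hAB : A * B = l⁻¹ • (B * A)) :
    ∀ i j : ℕ,
      (A - μ • 1) ^ i * B ^ j
        = l ^ (-(i * j : ℤ)) • (B ^ j * (A - (l ^ j * μ) • 1) ^ i) := by
  have hj : ∀ j : ℕ, A * B ^ j = (l ^ j)⁻¹ • (B ^ j * A) := by
    intro j
    induction j with
    | zero => simp
    | succ j ih =>
      rw [pow_succ, ← mul_assoc, ih, smul_mul_assoc, mul_assoc, hAB,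
        mul_smul_comm, smul_smul, pow_succ, mul_inv, mul_comm (l ^ j)⁻¹, mul_assoc (B ^ j)]
  have key : ∀ j : ℕ, (A - μ • 1) * B ^ j
      = (l ^ j)⁻¹ • (B ^ j * (A - (l ^ j * μ) • 1)) := by
    intro j
    rw [sub_mul, hj, mul_sub, smul_sub, smul_mul_assoc, one_mul,
      mul_smul_comm, mul_one, smul_smul, inv_mul_cancel_left₀ (pow_ne_zero _ hl)]
  intro i j
  induction i with
  | zero => simp
  | succ i ih =>
    rw [pow_succ', mul_assoc, ih, mul_smul_comm, ← mul_assoc, key, smul_mul_assoc, smul_smul,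
      mul_assoc, ← pow_succ']
    congr 1
    rw [← zpow_natCast l j, ← zpow_neg, ← zpow_add₀ hl]
    congr 1
    push_cast
    ring
end

section
/- Let E be a vector space over ℂ and let A, U, V : E → E be linear endomorphisms satisfying A∘U - U∘A = U, A∘V - V∘A = -V, and U∘V - V∘U = 2•A. Then for every k ∈ ℕ with k ≥ 1 and every D ∈ E with U^k D = 0, one has U^{k+1} (V D) = 0. -/
private lemma aux_AU {E : Type*} [AddCommGroup E] [Module ℂ E]
    (A U : Module.End ℂ E) (hAU : A * U - U * A = U) :
    ∀ n : ℕ, A * U ^ n = U ^ n * A + (n : ℂ) • U ^ n := by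
  have h1 : A * U = U * A + U := by
    have := sub_eq_iff_eq_add.mp hAU; linear_combination (norm := noncomm_ring) this
  intro n
  induction n with
  | zero => simp
  | succ n ih =>
    have : A * U ^ (n+1) = (A * U ^ n) * U := by noncomm_ring
    rw [this, ih]
    push_cast
    rw [add_mul, smul_mul_assoc, mul_assoc, h1]
    rw [mul_add, ← mul_assoc (U ^ n) U A, ← pow_succ]
    module

private lemma aux_UV {E : Type*} [AddCommGroup E] [Module ℂ E]
    (A U V : Module.End ℂ E) (hAU : A * U - U * A = U)
    (hUV : U * V - V * U = (2 : ℂ) • A) :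
    ∀ n : ℕ, U ^ (n+1) * V = V * U ^ (n+1) + ((2 : ℂ) * (n+1)) • (U ^ n * A)
      + (((n : ℂ)+1) * n) • U ^ n := by
  have h1 : U * V = V * U + (2 : ℂ) • A := by
    have := sub_eq_iff_eq_add.mp hUV; linear_combination (norm := noncomm_ring) this
  intro n
  induction n with
  | zero => simpa using h1
  | succ n ih =>
    have e1 : U ^ (n+2) * V = U * (U ^ (n+1) * V) := by rw [pow_succ', mul_assoc]
    rw [e1, ih]
    have e2 : U * (V * U ^ (n+1) + ((2:ℂ) * (n+1)) • (U ^ n * A) + (((n:ℂ)+1) * n) • U ^ n)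
        = (U * V) * U ^ (n+1) + ((2:ℂ) * (n+1)) • (U ^ (n+1) * A)
          + (((n:ℂ)+1) * n) • U ^ (n+1) := by
      rw [mul_add, mul_add, mul_smul_comm, mul_smul_comm, ← mul_assoc U V,
        ← mul_assoc U (U ^ n) A, ← pow_succ' U n]
    rw [e2, h1, add_mul, smul_mul_assoc, aux_AU A U hAU (n+1),
      mul_assoc V U, ← pow_succ']
    push_cast
    module

/-- In the sl(2,ℝ)-type relations `A∘U - U∘A = U`, `A∘V - V∘A = -V`, `U∘V - V∘U = 2A`,
the operator `V` maps the kernel of `U^k` into the kernel of `U^(k+1)`, for `k ≥ 1`. -/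
theorem stmt_7 {E : Type*} [AddCommGroup E] [Module ℂ E]
    (A U V : Module.End ℂ E)
    (hAU : A * U - U * A = U)
    (hAV : A * V - V * A = -V)
    (hUV : U * V - V * U = (2 : ℂ) • A) :
    ∀ k : ℕ, 1 ≤ k → ∀ D : E, (U ^ k) D = 0 → (U ^ (k + 1)) (V D) = 0 := by
  intro k hk D hD
  have h1 := congrArg (fun (T : Module.End ℂ E) => T D) (aux_UV A U V hAU hUV k)
  simp only [LinearMap.add_apply, LinearMap.smul_apply, Module.End.mul_apply] at h1
  have hUk1 : (U ^ (k+1)) D = 0 := by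
    rw [pow_succ', Module.End.mul_apply, hD, map_zero]
  have hUkA : (U ^ k) (A D) = 0 := by
    have h2 := congrArg (fun (T : Module.End ℂ E) => T D) (aux_AU A U hAU k)
    simp only [LinearMap.add_apply, LinearMap.smul_apply, Module.End.mul_apply] at h2
    have : A ((U ^ k) D) = (U ^ k) (A D) + (k:ℂ) • (U ^ k) D := h2
    rw [hD, map_zero, smul_zero, add_zero] at this
    exact this.symm
  calc (U ^ (k+1)) (V D) = V ((U ^ (k+1)) D) + ((2:ℂ) * (k+1)) • (U ^ k) (A D)
        + (((k:ℂ)+1) * k) • (U ^ k) D := h1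
  _ = 0 := by rw [hUk1, hD, hUkA, map_zero, smul_zero, smul_zero]; simp
end

section
/- Let λ > 0 be a real number and let χ₀ : ℝ → ℝ be a smooth, compactly supported function with ∫_ℝ χ₀ = 1. For a smooth compactly supported f : ℝ → ℂ define D₀(f) := ∫_ℝ f(ξ) dξ, D₁(f) := ∫_ℝ (∫_{-∞}^x (f(ξ) - D₀(f) χ₀(ξ)) dξ) dx, and f_λ(x) := λ^{1/2} f(λx). Then D₁(f_λ) = λ^{-3/2} D₁(f) + λ^{-1/2} D₀(f) · ∫_ℝ (∫_x^{λx} χ₀(ξ) dξ) dx. -/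
open MeasureTheory

/-- The zeroth invariant distribution `D⁰(f) = ∫ f`. -/
noncomputable def heisD₀ (f : ℝ → ℂ) : ℂ := ∫ ξ : ℝ, f ξ

/-- The first iterated invariant distribution
`D¹(f) = ∫ x, ∫_{-∞}^x (f(ξ) - D⁰(f) χ₀(ξ)) dξ dx`. -/
noncomputable def heisD₁ (χ₀ : ℝ → ℝ) (f : ℝ → ℂ) : ℂ :=
  ∫ x : ℝ, ∫ ξ in Set.Iic x, (f ξ - heisD₀ f * (χ₀ ξ : ℂ))

/-- The action `f ↦ f_λ`, `f_λ(x) = λ^{1/2} f(λ x)`, of a partially hyperbolic Heisenberg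
automorphism in an irreducible representation on `L²(ℝ)`. -/
noncomputable def heisAct (l : ℝ) (f : ℝ → ℂ) : ℝ → ℂ :=
  fun x => ((l ^ ((1 : ℝ) / 2) : ℝ) : ℂ) * f (l * x)

section helpers
open Set

variable {E : Type*} [NormedAddCommGroup E] [NormedSpace ℝ E]

/-- Change of variables `ξ ↦ l ξ` on `Iic`. -/
lemma aux_comp_mul_left_Iic (g : ℝ → E) {l : ℝ} (hl : 0 < l) (x : ℝ) :
    ∫ ξ in Set.Iic x, g (l * ξ) = l⁻¹ • ∫ ξ in Set.Iic (l * x), g ξ := by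
  have h := MeasureTheory.Measure.setIntegral_comp_smul_of_pos (volume : Measure ℝ)
    g (Set.Iic x) hl
  simp only [smul_eq_mul, Module.finrank_self, pow_one] at h
  rw [h, LinearOrderedField.smul_Iic hl]

lemma aux_primitive_continuous {g : ℝ → E} (hg : Integrable g) :
    Continuous fun x => ∫ ξ in Iic x, g ξ := by
  have h : ∀ x : ℝ, (∫ ξ in Iic x, g ξ)
      = (∫ ξ in (0:ℝ)..x, g ξ) + ∫ ξ in Iic (0:ℝ), g ξ := by
    intro x
    rw [← intervalIntegral.integral_Iic_sub_Iic hg.integrableOn hg.integrableOn,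
      sub_add_cancel]
  have h2 : (fun x => ∫ ξ in Iic x, g ξ)
      = fun x => (∫ ξ in (0:ℝ)..x, g ξ) + ∫ ξ in Iic (0:ℝ), g ξ := funext h
  rw [h2]
  exact (hg.continuous_primitive 0).add continuous_const

lemma aux_primitive_right {g : ℝ → E} (hg : Integrable g) {S x : ℝ}
    (hS : tsupport g ⊆ Metric.closedBall 0 S) (hx : S < x) :
    (∫ ξ in Iic x, g ξ) = ∫ ξ, g ξ := by
  have h0 : (∫ ξ in Ioi x, g ξ) = 0 := by
    apply setIntegral_eq_zero_of_forall_eq_zero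
    intro ξ hξ
    apply image_eq_zero_of_notMem_tsupport
    intro hmem
    have := hS hmem
    simp only [Metric.mem_closedBall, Real.dist_eq, sub_zero] at this
    have : ξ ≤ S := le_trans (le_abs_self ξ) this
    exact absurd (lt_trans hx (mem_Ioi.mp hξ)) (not_lt.mpr this)
  rw [← intervalIntegral.integral_Iic_add_Ioi hg.integrableOn hg.integrableOn, h0, add_zero]

lemma aux_primitive_left {g : ℝ → E} {S x : ℝ}
    (hS : tsupport g ⊆ Metric.closedBall 0 S) (hx : x < -S) :
    (∫ ξ in Iic x, g ξ) = 0 := by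
  apply setIntegral_eq_zero_of_forall_eq_zero
  intro ξ hξ
  apply image_eq_zero_of_notMem_tsupport
  intro hmem
  have := hS hmem
  simp only [Metric.mem_closedBall, Real.dist_eq, sub_zero] at this
  have h1 : -S ≤ ξ := le_trans (neg_le_neg this) (neg_abs_le ξ)
  exact absurd (lt_of_le_of_lt (le_trans h1 (mem_Iic.mp hξ)) hx) (lt_irrefl _)

lemma aux_primitive_compact_support {g : ℝ → E} (hg : Integrable g)
    (hc : HasCompactSupport g) (hzero : (∫ ξ, g ξ) = 0) :
    HasCompactSupport fun x => ∫ ξ in Iic x, g ξ := by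
  obtain ⟨S, hS⟩ := hc.isBounded.subset_closedBall 0
  apply HasCompactSupport.intro (isCompact_Icc (a := -(S+1)) (b := S+1))
  intro x hx
  simp only [mem_Icc, not_and_or, not_le] at hx
  rcases hx with hx | hx
  · exact aux_primitive_left hS (by linarith)
  · rw [aux_primitive_right hg hS (by linarith), hzero]

lemma aux_integral_ofReal {μ : Measure ℝ} (f : ℝ → ℝ) :
    ∫ x, ((f x : ℝ) : ℂ) ∂μ = ((∫ x, f x ∂μ : ℝ) : ℂ) := integral_ofReal

end helpers

/-- Action of the Heisenberg automorphism on the first iterated invariant distribution: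
`D¹(f_λ) = λ^{-3/2} D¹(f) + λ^{-1/2} D⁰(f) ∫ x, ∫_x^{λx} χ₀`. -/
theorem stmt_12 (l : ℝ) (hl : 0 < l) (χ₀ : ℝ → ℝ)
    (hχ₀s : ContDiff ℝ (⊤ : ℕ∞) χ₀) (hχ₀c : HasCompactSupport χ₀)
    (hχ₀i : (∫ x : ℝ, χ₀ x) = 1)
    (f : ℝ → ℂ) (hfs : ContDiff ℝ (⊤ : ℕ∞) f) (hfc : HasCompactSupport f) :
    heisD₁ χ₀ (heisAct l f)
      = ((l ^ (-(3 : ℝ) / 2) : ℝ) : ℂ) * heisD₁ χ₀ f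
        + ((l ^ (-(1 : ℝ) / 2) : ℝ) : ℂ) * heisD₀ f
            * ((∫ x : ℝ, ∫ ξ in x..(l * x), χ₀ ξ : ℝ) : ℂ) := by
  have hχC : Continuous fun ξ : ℝ => ((χ₀ ξ : ℝ) : ℂ) :=
    Complex.continuous_ofReal.comp hχ₀s.continuous
  have hfi : Integrable f := hfs.continuous.integrable_of_hasCompactSupport hfc
  have hχi : Integrable χ₀ := hχ₀s.continuous.integrable_of_hasCompactSupport hχ₀c
  have hχCi : Integrable fun ξ : ℝ => ((χ₀ ξ : ℝ) : ℂ) := hχi.ofReal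
  have hχCc : HasCompactSupport fun ξ : ℝ => ((χ₀ ξ : ℝ) : ℂ) :=
    hχ₀c.comp_left (g := Complex.ofReal) Complex.ofReal_zero
  set c : ℂ := heisD₀ f with hc
  set g : ℝ → ℂ := fun ξ => f ξ - c * ((χ₀ ξ : ℝ) : ℂ) with hgdef
  have hgc : Continuous g := hfs.continuous.sub (continuous_const.mul hχC)
  have hgsupp : HasCompactSupport g := by
    apply HasCompactSupport.intro (hfc.union hχ₀c)
    intro x hx
    simp only [Set.mem_union, not_or] at hx
    simp [hgdef, image_eq_zero_of_notMem_tsupport hx.1, image_eq_zero_of_notMem_tsupport hx.2]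
  have hgi : Integrable g := hgc.integrable_of_hasCompactSupport hgsupp
  have hχCint : (∫ ξ : ℝ, ((χ₀ ξ : ℝ) : ℂ)) = 1 := by
    rw [aux_integral_ofReal, hχ₀i, Complex.ofReal_one]
  have hgzero : (∫ ξ, g ξ) = 0 := by
    rw [hgdef]
    rw [integral_sub hfi (hχCi.const_mul c), MeasureTheory.integral_const_mul, hχCint]
    simp [hc, heisD₀]
  set H : ℝ → ℂ := fun x => ∫ ξ in Set.Iic x, g ξ with hHdef
  have hHc : Continuous H := aux_primitive_continuous hgi
  have hHsupp : HasCompactSupport H := aux_primitive_compact_support hgi hgsupp hgzero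
  have hHi : Integrable H := hHc.integrable_of_hasCompactSupport hHsupp
  set X : ℝ → ℝ := fun x => ∫ ξ in Set.Iic x, χ₀ ξ with hXdef
  have hXc : Continuous X := aux_primitive_continuous hχi
  set k : ℝ → ℝ := fun x => ∫ ξ in x..(l * x), χ₀ ξ with hkdef
  have hkX : ∀ x, k x = X (l * x) - X x := fun x =>
    (intervalIntegral.integral_Iic_sub_Iic hχi.integrableOn hχi.integrableOn).symm
  have hkc : Continuous k := by
    have h2 : k = fun x => X (l * x) - X x := funext hkX
    rw [h2]
    exact (hXc.comp (continuous_const.mul continuous_id)).sub hXc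
  have hksupp : HasCompactSupport k := by
    obtain ⟨S, hS⟩ := hχ₀c.isBounded.subset_closedBall 0
    have hT1 : S + 1 ≤ max (S + 1) ((S + 1) / l) := le_max_left _ _
    have hT2 : (S + 1) / l ≤ max (S + 1) ((S + 1) / l) := le_max_right _ _
    have hT3 : S + 1 ≤ l * max (S + 1) ((S + 1) / l) := by
      rw [mul_comm]; exact (div_le_iff₀ hl).mp hT2
    apply HasCompactSupport.intro
      (isCompact_Icc (a := -(max (S + 1) ((S + 1) / l))) (b := max (S + 1) ((S + 1) / l)))
    intro x hx
    simp only [Set.mem_Icc, not_and_or, not_le] at hx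
    rcases hx with hx | hx
    · have h1 : x < -S := by linarith
      have h2 : l * x < -S := by
        have h3 := mul_lt_mul_of_pos_left hx hl
        have h4 : l * -(max (S + 1) ((S + 1) / l)) = -(l * max (S + 1) ((S + 1) / l)) := by ring
        rw [h4] at h3
        linarith
      rw [hkX x]
      simp only [hXdef]
      rw [aux_primitive_left hS h1, aux_primitive_left hS h2, sub_zero]
    · have h1 : S < x := by linarith
      have h2 : S < l * x := by
        have h3 := mul_lt_mul_of_pos_left hx hl
        linarith
      rw [hkX x]
      simp only [hXdef]
      rw [aux_primitive_right hχi hS h1, aux_primitive_right hχi hS h2, sub_self]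
  have hki : Integrable k := hkc.integrable_of_hasCompactSupport hksupp
  have habs : |l⁻¹| = l⁻¹ := abs_of_pos (inv_pos.mpr hl)
  have hpow1 : ((l ^ ((1 : ℝ) / 2) : ℝ) : ℂ) * ((l⁻¹ : ℝ) : ℂ) = ((l ^ (-(1 : ℝ) / 2) : ℝ) : ℂ) := by
    rw [← Complex.ofReal_mul]
    congr 1
    rw [← Real.rpow_neg_one l, ← Real.rpow_add hl]
    norm_num
  have hpow2 : ((l ^ (-(1 : ℝ) / 2) : ℝ) : ℂ) * ((l⁻¹ : ℝ) : ℂ)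
      = ((l ^ (-(3 : ℝ) / 2) : ℝ) : ℂ) := by
    rw [← Complex.ofReal_mul]
    congr 1
    rw [← Real.rpow_neg_one l, ← Real.rpow_add hl]
    norm_num
  have hfl_i : Integrable fun ξ => f (l * ξ) := hfi.comp_mul_left' hl.ne'
  have hD0a : heisD₀ (heisAct l f) = ((l ^ (-(1 : ℝ) / 2) : ℝ) : ℂ) * c := by
    rw [hc]
    unfold heisD₀ heisAct
    rw [MeasureTheory.integral_const_mul, Measure.integral_comp_mul_left (fun y => f y) l,
      habs, Complex.real_smul, ← mul_assoc, hpow1]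
  have hXint : ∀ y : ℝ, (∫ ξ in Set.Iic y, ((χ₀ ξ : ℝ) : ℂ)) = ((X y : ℝ) : ℂ) := by
    intro y
    exact integral_ofReal
  have hF : ∀ y : ℝ, (∫ ξ in Set.Iic y, f ξ) = H y + c * ((X y : ℝ) : ℂ) := by
    intro y
    have h1 : (∫ ξ in Set.Iic y, (g ξ + c * ((χ₀ ξ : ℝ) : ℂ))) = ∫ ξ in Set.Iic y, f ξ := by
      apply integral_congr_ae
      filter_upwards with ξ
      rw [hgdef]
      ring
    rw [← h1, integral_add hgi.integrableOn (hχCi.const_mul c).integrableOn,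
      MeasureTheory.integral_const_mul, hXint y, hHdef]
  have hinner : ∀ x : ℝ,
      (∫ ξ in Set.Iic x, (heisAct l f ξ - heisD₀ (heisAct l f) * ((χ₀ ξ : ℝ) : ℂ)))
        = ((l ^ (-(1 : ℝ) / 2) : ℝ) : ℂ) * (H (l * x) + c * ((k x : ℝ) : ℂ)) := by
    intro x
    have e1 : (∫ ξ in Set.Iic x,
        (heisAct l f ξ - heisD₀ (heisAct l f) * ((χ₀ ξ : ℝ) : ℂ)))
        = (∫ ξ in Set.Iic x, heisAct l f ξ)
          - ∫ ξ in Set.Iic x, heisD₀ (heisAct l f) * ((χ₀ ξ : ℝ) : ℂ) := by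
      apply integral_sub
      · exact (hfl_i.const_mul _).integrableOn
      · exact (hχCi.const_mul _).integrableOn
    rw [e1]
    have e2 : (∫ ξ in Set.Iic x, heisAct l f ξ)
        = ((l ^ ((1 : ℝ) / 2) : ℝ) : ℂ) * (l⁻¹ • ∫ ξ in Set.Iic (l * x), f ξ) := by
      unfold heisAct
      rw [MeasureTheory.integral_const_mul, aux_comp_mul_left_Iic f hl x]
    have e3 : (∫ ξ in Set.Iic x, heisD₀ (heisAct l f) * ((χ₀ ξ : ℝ) : ℂ))
        = ((l ^ (-(1 : ℝ) / 2) : ℝ) : ℂ) * c * ((X x : ℝ) : ℂ) := by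
      rw [MeasureTheory.integral_const_mul, hXint x, hD0a]
    rw [e2, e3, hF (l * x), Complex.real_smul, Complex.ofReal_inv]
    have e4 : ((X (l * x) : ℝ) : ℂ) = ((X x : ℝ) : ℂ) + ((k x : ℝ) : ℂ) := by
      rw [← Complex.ofReal_add]
      congr 1
      rw [hkX x]
      ring
    rw [e4]
    have e5 : ((l ^ ((1 : ℝ) / 2) : ℝ) : ℂ) * ((l : ℂ))⁻¹ = ((l ^ (-(1 : ℝ) / 2) : ℝ) : ℂ) := by
      rw [← Complex.ofReal_inv]
      exact hpow1
    calc ((l ^ ((1 : ℝ) / 2) : ℝ) : ℂ) * ((l : ℂ)⁻¹ * (H (l * x)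
            + c * (((X x : ℝ) : ℂ) + ((k x : ℝ) : ℂ))))
          - ((l ^ (-(1 : ℝ) / 2) : ℝ) : ℂ) * c * ((X x : ℝ) : ℂ)
        = (((l ^ ((1 : ℝ) / 2) : ℝ) : ℂ) * ((l : ℂ))⁻¹) * (H (l * x)
            + c * (((X x : ℝ) : ℂ) + ((k x : ℝ) : ℂ)))
          - ((l ^ (-(1 : ℝ) / 2) : ℝ) : ℂ) * c * ((X x : ℝ) : ℂ) := by ring
      _ = ((l ^ (-(1 : ℝ) / 2) : ℝ) : ℂ) * (H (l * x) + c * ((k x : ℝ) : ℂ)) := by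
          rw [e5]; ring
  have hHl_i : Integrable fun x => H (l * x) := hHi.comp_mul_left' hl.ne'
  have hkC_i : Integrable fun x => ((k x : ℝ) : ℂ) := hki.ofReal
  have main : heisD₁ χ₀ (heisAct l f)
      = ((l ^ (-(1 : ℝ) / 2) : ℝ) : ℂ)
        * ((∫ x, H (l * x)) + c * ∫ x : ℝ, ((k x : ℝ) : ℂ)) := by
    unfold heisD₁
    simp only [hinner]
    rw [MeasureTheory.integral_const_mul,
      integral_add hHl_i (hkC_i.const_mul c), MeasureTheory.integral_const_mul]
  have hHl : (∫ x, H (l * x)) = ((l⁻¹ : ℝ) : ℂ) * heisD₁ χ₀ f := by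
    rw [Measure.integral_comp_mul_left H l, habs, Complex.real_smul]
    congr 1
  have hkint : (∫ x : ℝ, ((k x : ℝ) : ℂ)) = ((∫ x : ℝ, ∫ ξ in x..(l * x), χ₀ ξ : ℝ) : ℂ) := by
    rw [hkdef]
    exact aux_integral_ofReal _
  rw [main, hHl, hkint, mul_add, ← mul_assoc, ← mul_assoc, hpow2]
end

section
/- Let λ > 0 be a real number and let χ₀ : ℝ → ℝ be a smooth, compactly supported, even function with ∫_ℝ χ₀ = 1. For a smooth compactly supported f : ℝ → ℂ define D₀(f) := ∫_ℝ f(ξ) dξ, D₁(f) := ∫_ℝ (∫_{-∞}^x (f(ξ) - D₀(f) χ₀(ξ)) dξ) dx, and f_λ(x) := λ^{1/2} f(λx). Then D₁(f_λ) = λ^{-3/2} D₁(f). -/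
open MeasureTheory

/-- Continuity of `x ↦ ∫_{Iic x} φ` for integrable `φ`. -/
lemma heisPrim_continuous {φ : ℝ → ℂ} (hφ : Integrable φ) :
    Continuous (fun x => ∫ ξ in Set.Iic x, φ ξ) := by
  have h2 := hφ.continuous_primitive 0
  have h : (fun x => ∫ ξ in Set.Iic x, φ ξ)
      = fun x => (∫ ξ in Set.Iic (0:ℝ), φ ξ) + ∫ ξ in (0:ℝ)..x, φ ξ := by
    funext x
    rw [← intervalIntegral.integral_Iic_sub_Iic hφ.integrableOn hφ.integrableOn]
    ring
  rw [h]
  exact continuous_const.add h2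

/-- The primitive vanishes below the support. -/
lemma heisPrim_zero_below {φ : ℝ → ℂ} {R x : ℝ}
    (hsupp : ∀ ξ, R < |ξ| → φ ξ = 0) (hx : x < -R) :
    (∫ ξ in Set.Iic x, φ ξ) = 0 := by
  apply setIntegral_eq_zero_of_forall_eq_zero
  intro ξ hξ
  exact hsupp ξ (lt_of_lt_of_le (by simp only [Set.mem_Iic] at hξ; linarith) (neg_le_abs ξ))

/-- The primitive equals the total integral above the support. -/
lemma heisPrim_total_above {φ : ℝ → ℂ} (hφ : Integrable φ) {R x : ℝ}
    (hsupp : ∀ ξ, R < |ξ| → φ ξ = 0) (hx : R < x) :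
    (∫ ξ in Set.Iic x, φ ξ) = ∫ ξ, φ ξ := by
  rw [← intervalIntegral.integral_Iic_add_Ioi hφ.integrableOn hφ.integrableOn]
  have h0 : (∫ ξ in Set.Ioi x, φ ξ) = 0 := by
    apply setIntegral_eq_zero_of_forall_eq_zero
    intro ξ hξ
    simp only [Set.mem_Ioi] at hξ
    exact hsupp ξ (lt_of_lt_of_le (lt_trans hx hξ) (le_abs_self ξ))
  rw [h0, add_zero]

/-- A compactly supported function vanishes outside a symmetric interval, with
nonnegative radius. -/
lemma heisSupport_radius {φ : ℝ → ℂ} (hφ : HasCompactSupport φ) :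
    ∃ R : ℝ, 0 ≤ R ∧ ∀ ξ, R < |ξ| → φ ξ = 0 := by
  obtain ⟨R, hR⟩ := hφ.isBounded.subset_closedBall 0
  refine ⟨max R 0, le_max_right _ _, fun ξ hξ => ?_⟩
  apply image_eq_zero_of_notMem_tsupport
  intro hmem
  have := hR hmem
  simp only [Metric.mem_closedBall, Real.dist_eq, sub_zero] at this
  have : |ξ| ≤ max R 0 := le_trans this (le_max_left _ _)
  linarith

/-- When the cutoff `χ₀` is even, the first iterated invariant distribution is an
eigendistribution: `D¹(f_λ) = λ^{-3/2} D¹(f)`. -/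
theorem stmt_13 (l : ℝ) (hl : 0 < l) (χ₀ : ℝ → ℝ)
    (hχ₀s : ContDiff ℝ (⊤ : ℕ∞) χ₀) (hχ₀c : HasCompactSupport χ₀)
    (hχ₀e : ∀ x : ℝ, χ₀ (-x) = χ₀ x)
    (hχ₀i : (∫ x : ℝ, χ₀ x) = 1)
    (f : ℝ → ℂ) (hfs : ContDiff ℝ (⊤ : ℕ∞) f) (hfc : HasCompactSupport f) :
    heisD₁ χ₀ (heisAct l f) = ((l ^ (-(3 : ℝ) / 2) : ℝ) : ℂ) * heisD₁ χ₀ f := by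
  have hl' : l ≠ 0 := hl.ne'
  set c : ℝ := l ^ ((1 : ℝ) / 2) with hc
  -- complex-valued cutoff
  set χ : ℝ → ℂ := fun x => ((χ₀ x : ℝ) : ℂ) with hχdef
  have hχcont : Continuous χ := Complex.continuous_ofReal.comp hχ₀s.continuous
  have hχsupp : HasCompactSupport χ :=
    hχ₀c.comp_left (g := Complex.ofReal) Complex.ofReal_zero
  have hχint : Integrable χ := hχcont.integrable_of_hasCompactSupport hχsupp
  have hχ1 : (∫ x, χ x) = 1 := by
    rw [hχdef]
    rw [show (∫ x, ((χ₀ x : ℝ):ℂ)) = ((∫ x, χ₀ x : ℝ) : ℂ) from integral_ofReal, hχ₀i]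
    norm_num
  have hfi : Integrable f := hfs.continuous.integrable_of_hasCompactSupport hfc
  set D : ℂ := heisD₀ f with hD
  -- the primitive of χ
  set C : ℝ → ℂ := fun x => ∫ ξ in Set.Iic x, χ ξ with hCdef
  have hCcont : Continuous C := heisPrim_continuous hχint
  obtain ⟨Rχ, hRχ0, hRχ⟩ := heisSupport_radius hχsupp
  have hC0 : ∀ y, y < -Rχ → C y = 0 := fun y hy => heisPrim_zero_below hRχ hy
  have hC1 : ∀ y, Rχ < y → C y = 1 := fun y hy => by
    have h1 : C y = ∫ ξ, χ ξ := heisPrim_total_above hχint hRχ hy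
    rw [h1, hχ1]
  have hCneg : ∀ y, C (-y) = 1 - C y := by
    intro y
    have h1 : (∫ ξ in Set.Iic (-y), χ (-ξ)) = ∫ ξ in Set.Ioi y, χ ξ := by
      simpa using integral_comp_neg_Iic (-y) χ
    have h2 : ∀ ξ : ℝ, χ (-ξ) = χ ξ := fun ξ => by
      simp only [hχdef, hχ₀e]
    have h3 : C (-y) = ∫ ξ in Set.Ioi y, χ ξ := by
      rw [hCdef]
      simp only [← h1, h2]
    have h4 : C y + (∫ ξ in Set.Ioi y, χ ξ) = ∫ ξ, χ ξ :=
      intervalIntegral.integral_Iic_add_Ioi hχint.integrableOn hχint.integrableOn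
    rw [h3, eq_sub_iff_add_eq, add_comm, h4, hχ1]
  -- the mean-zero integrand for f, and its primitive h
  set φ : ℝ → ℂ := fun ξ => f ξ - D * χ ξ with hφdef
  have hφcont : Continuous φ := hfs.continuous.sub (continuous_const.mul hχcont)
  have hφsupp : HasCompactSupport φ :=
    hfc.comp₂_left (hχsupp.mul_left (f := fun _ => D)) (sub_zero 0)
  have hφint : Integrable φ := hφcont.integrable_of_hasCompactSupport hφsupp
  have hφ0 : (∫ ξ, φ ξ) = 0 := by
    rw [hφdef]
    rw [integral_sub hfi (hχint.const_mul D), integral_const_mul, hχ1]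
    rw [mul_one, hD, heisD₀, sub_self]
  set h : ℝ → ℂ := fun x => ∫ ξ in Set.Iic x, φ ξ with hhdef
  have hh_cont : Continuous h := heisPrim_continuous hφint
  obtain ⟨Rφ, hRφ0, hRφ⟩ := heisSupport_radius hφsupp
  have hh_supp : HasCompactSupport h := by
    apply HasCompactSupport.intro (isCompact_Icc (a := -(Rφ+1)) (b := Rφ+1))
    intro x hx
    simp only [Set.mem_Icc, not_and_or, not_le] at hx
    rcases hx with hx | hx
    · exact heisPrim_zero_below hRφ (by linarith)
    · show (∫ ξ in Set.Iic x, φ ξ) = 0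
      rw [heisPrim_total_above hφint hRφ (by linarith), hφ0]
  have hh_int : Integrable h := hh_cont.integrable_of_hasCompactSupport hh_supp
  have hh_eq : ∀ y, h y = (∫ ξ in Set.Iic y, f ξ) - D * C y := by
    intro y
    show (∫ ξ in Set.Iic y, (f ξ - D * χ ξ)) = _
    rw [integral_sub hfi.integrableOn (hχint.const_mul D).integrableOn,
      integral_const_mul]
  have hD1f : heisD₁ χ₀ f = ∫ x, h x := rfl
  -- the difference of rescaled primitives of χ
  set k : ℝ → ℂ := fun x => C (l * x) - C x with hkdef
  have hk_cont : Continuous k := (hCcont.comp (continuous_const.mul continuous_id)).sub hCcont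
  have hk_supp : HasCompactSupport k := by
    set M : ℝ := max (Rχ + 1) ((Rχ + 1) / l) with hM
    apply HasCompactSupport.intro (isCompact_Icc (a := -M) (b := M))
    intro x hx
    simp only [Set.mem_Icc, not_and_or, not_le] at hx
    have hM1 : Rχ + 1 ≤ M := le_max_left _ _
    have hM2 : (Rχ + 1) / l ≤ M := le_max_right _ _
    rcases hx with hx | hx
    · have h1 : x < -Rχ := by linarith
      have h2 : l * x < -Rχ := by
        have : x < -((Rχ + 1)/l) := by linarith
        have : l * x < -(Rχ + 1) := by
          have := (mul_lt_mul_iff_right₀ hl).mpr this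
          rwa [mul_neg, mul_div_cancel₀ _ hl'] at this
        linarith
      rw [hkdef]
      simp only [hC0 _ h1, hC0 _ h2, sub_zero]
    · have h1 : Rχ < x := by linarith
      have h2 : Rχ < l * x := by
        have : (Rχ + 1)/l < x := by linarith
        have : Rχ + 1 < l * x := by
          have := (mul_lt_mul_iff_right₀ hl).mpr this
          rwa [mul_div_cancel₀ _ hl'] at this
        linarith
      rw [hkdef]
      simp only [hC1 _ h1, hC1 _ h2, sub_self]
  have hk_int : Integrable k := hk_cont.integrable_of_hasCompactSupport hk_supp
  have hk_odd : ∀ x, k (-x) = - k x := by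
    intro x
    rw [hkdef]
    simp only [mul_neg, hCneg]
    ring
  have hk0 : (∫ x, k x) = 0 := by
    have h1 : (∫ x, k (-x)) = ∫ x, k x := integral_neg_eq_self k volume
    have h2 : (∫ x, k (-x)) = -∫ x, k x := by
      simp_rw [hk_odd]
      exact integral_neg k
    rw [h2] at h1
    linear_combination -h1 / 2
  -- D₀ of the transformed function
  have hD0act : heisD₀ (heisAct l f) = ((c * l⁻¹ : ℝ) : ℂ) * D := by
    rw [heisD₀]
    show (∫ x, ((c:ℝ):ℂ) * f (l * x)) = _
    rw [integral_const_mul, Measure.integral_comp_mul_left f l,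
      abs_of_pos (inv_pos.mpr hl), Complex.real_smul]
    rw [hD, heisD₀]
    push_cast
    ring
  -- rescaling the inner Iic integral
  have hsub : ∀ x : ℝ, (∫ ξ in Set.Iic x, f (l * ξ)) = ((l⁻¹:ℝ):ℂ) * ∫ ξ in Set.Iic (l*x), f ξ := by
    intro x
    have := Measure.setIntegral_comp_smul_of_pos volume f (Set.Iic x) hl
    simp only [smul_eq_mul, Module.finrank_self, pow_one] at this
    rw [this, LinearOrderedField.smul_Iic hl, Complex.real_smul]
  -- the inner integral of the transformed function, pointwise
  have hinner : ∀ x : ℝ,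
      (∫ ξ in Set.Iic x, (heisAct l f ξ - heisD₀ (heisAct l f) * ((χ₀ ξ : ℝ) : ℂ)))
        = ((c * l⁻¹ : ℝ) : ℂ) * (h (l * x) + D * k x) := by
    intro x
    have hact : ∀ ξ : ℝ, heisAct l f ξ - heisD₀ (heisAct l f) * ((χ₀ ξ : ℝ) : ℂ)
        = ((c:ℝ):ℂ) * f (l * ξ) - (((c * l⁻¹ : ℝ):ℂ) * D) * χ ξ := by
      intro ξ
      rw [heisAct, hD0act]
    simp only [hact]
    rw [integral_sub (((hfi.comp_mul_left' hl').const_mul _).integrableOn)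
      ((hχint.const_mul _).integrableOn), integral_const_mul, integral_const_mul, hsub x]
    rw [hh_eq (l * x)]
    simp only [hkdef, hCdef]
    push_cast
    ring
  -- put everything together
  have hmain : heisD₁ χ₀ (heisAct l f)
      = ((c * l⁻¹ : ℝ) : ℂ) * ((∫ x, h (l * x)) + D * ∫ x, k x) := by
    rw [heisD₁]
    simp only [hinner]
    rw [integral_const_mul,
      integral_add (hh_int.comp_mul_left' hl') (hk_int.const_mul D), integral_const_mul]
  have hresc : (∫ x, h (l * x)) = ((l⁻¹:ℝ):ℂ) * ∫ x, h x := by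
    rw [Measure.integral_comp_mul_left h l, abs_of_pos (inv_pos.mpr hl),
      Complex.real_smul]
  have hpow : c * l⁻¹ * l⁻¹ = l ^ (-(3:ℝ)/2) := by
    rw [hc, ← Real.rpow_neg_one l, ← Real.rpow_add hl, ← Real.rpow_add hl]
    norm_num
  rw [hmain, hk0, hresc, hD1f]
  rw [mul_zero, add_zero, ← hpow]
  push_cast
  ring
end

section
/- Let λ > 0 be a real number, let χ₀ : ℝ → ℝ be a smooth, compactly supported, even function with ∫_ℝ χ₀ = 1, and let χ₁ : ℝ → ℝ be a smooth, compactly supported function with ∫_ℝ χ₁ = 0 and ∫_ℝ (∫_{-∞}^x χ₁(ξ) dξ) dx = 1. For a smooth compactly supported f : ℝ → ℂ define D₀(f) := ∫_ℝ f(ξ) dξ, D₁(f) := ∫_ℝ (∫_{-∞}^x (f(ξ) - D₀(f)χ₀(ξ)) dξ) dx, D₂(f) := ∫_ℝ (∫_{-∞}^{x} (∫_{-∞}^{ξ₁} (f(ξ₀) - D₀(f)χ₀(ξ₀) - D₁(f)χ₁(ξ₀)) dξ₀) dξ₁) dx, and f_λ(x) := λ^{1/2} f(λx). Then D₂(f_λ)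 = λ^{-5/2} D₂(f) + c_{2,0}(λ) λ^{-1/2} D₀(f) + c_{2,1}(λ) λ^{-3/2} D₁(f), where c_{2,j}(λ) := ∫_ℝ (∫_{-∞}^{x} (∫_{-∞}^{ξ₁} (λ^{j+1} χ_j(λξ₀) - χ_j(ξ₀)) dξ₀) dξ₁) dx for j = 0, 1. -/
open MeasureTheory Set

/-- The primitive `x ↦ ∫_{-∞}^x g`. -/
noncomputable def primIic (g : ℝ → ℂ) : ℝ → ℂ := fun x => ∫ ξ in Set.Iic x, g ξ

lemma primIic_continuous {g : ℝ → ℂ} (hg : Integrable g) : Continuous (primIic g) := by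
  have h : primIic g = fun x => primIic g 0 + ∫ t in (0:ℝ)..x, g t := by
    funext x
    simp only [primIic]
    rw [← intervalIntegral.integral_Iic_sub_Iic (hg.integrableOn) (hg.integrableOn)]
    ring
  rw [h]
  exact continuous_const.add (hg.continuous_primitive 0)

lemma primIic_hasCompactSupport {g : ℝ → ℂ} (hgcont : Continuous g)
    (hgc : HasCompactSupport g) (h0 : (∫ x : ℝ, g x) = 0) :
    HasCompactSupport (primIic g) := by
  have hint : Integrable g := hgcont.integrable_of_hasCompactSupport hgc
  obtain ⟨R, hR⟩ : ∃ R : ℝ, tsupport g ⊆ Icc (-R) R := by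
    obtain ⟨r, hr⟩ := hgc.isBounded.subset_closedBall 0
    refine ⟨r, ?_⟩
    simpa [Real.closedBall_eq_Icc, zero_sub, zero_add] using hr
  apply HasCompactSupport.intro (isCompact_Icc (a := -R) (b := R))
  intro x hx
  rw [mem_Icc, not_and_or, not_le, not_le] at hx
  rcases hx with hx | hx
  · have hz : ∀ ξ ∈ Iic x, g ξ = 0 := by
      intro ξ hξ
      apply image_eq_zero_of_notMem_tsupport
      intro hmem
      have := hR hmem
      simp only [mem_Icc] at this
      linarith [mem_Iic.mp hξ, this.1]
    simp only [primIic]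
    rw [setIntegral_congr_fun measurableSet_Iic hz]
    simp
  · have h2 : (∫ ξ in Ioi x, g ξ) = 0 := by
      have hz : ∀ ξ ∈ Ioi x, g ξ = 0 := by
        intro ξ hξ
        apply image_eq_zero_of_notMem_tsupport
        intro hmem
        have hm := mem_Ioi.mp hξ
        linarith [(hR hmem).2]
      rw [setIntegral_congr_fun measurableSet_Ioi hz]
      simp
    have h3 := intervalIntegral.integral_Iic_add_Ioi (b := x) hint.integrableOn hint.integrableOn
    simp only [primIic]
    rw [← h3, h2] at h0
    simpa using h0

lemma primIic_ccs {g : ℝ → ℂ} (hgcont : Continuous g)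
    (hgc : HasCompactSupport g) (h0 : (∫ x : ℝ, g x) = 0) :
    Continuous (primIic g) ∧ HasCompactSupport (primIic g) ∧ Integrable (primIic g) := by
  have hint : Integrable g := hgcont.integrable_of_hasCompactSupport hgc
  have h1 := primIic_continuous hint
  have h2 := primIic_hasCompactSupport hgcont hgc h0
  exact ⟨h1, h2, h1.integrable_of_hasCompactSupport h2⟩

lemma primIic_comp_mul {g : ℝ → ℂ} {l : ℝ} (hl : 0 < l) (x : ℝ) :
    primIic (fun ξ => g (l * ξ)) x = ((l⁻¹ : ℝ) : ℂ) * primIic g (l * x) := by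
  simp only [primIic]
  have h1 : (∫ ξ in Iic x, g (l * ξ)) = ∫ t in Ioi (-x), g (-(l * t)) := by
    rw [← integral_comp_neg_Iic (c := x) (f := fun t => g (-(l * t)))]
    simp [mul_neg, neg_neg]
  rw [h1]
  have h2 : (∫ t in Ioi (-x), g (-(l * t))) = l⁻¹ • ∫ t in Ioi (l * -x), g (-t) :=
    integral_comp_mul_left_Ioi (fun t => g (-t)) (-x) hl
  rw [h2, integral_comp_neg_Ioi]
  norm_num [Complex.real_smul]

lemma integral_comp_mul_of_pos (g : ℝ → ℂ) {l : ℝ} (hl : 0 < l) :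
    (∫ x : ℝ, g (l * x)) = ((l⁻¹ : ℝ) : ℂ) * ∫ x : ℝ, g x := by
  rw [Measure.integral_comp_mul_left g l, abs_of_pos (inv_pos.mpr hl), Complex.real_smul]

lemma primIic_comb {l : ℝ} (hl : 0 < l) {w u v : ℝ → ℂ} (hw : Integrable w)
    (hu : Integrable u) (hv : Integrable v) (c d e : ℂ) (x : ℝ) :
    primIic (fun ξ => c * w (l * ξ) + d * u ξ + e * v ξ) x
      = c * (((l⁻¹ : ℝ) : ℂ) * primIic w (l * x)) + d * primIic u x + e * primIic v x := by
  have hwl : Integrable fun ξ => w (l * ξ) := hw.comp_mul_left' hl.ne'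
  simp only [primIic]
  have h1 : Integrable fun ξ => c * w (l * ξ) := hwl.const_mul c
  have h2 : Integrable fun ξ => d * u ξ := hu.const_mul d
  have h3 : Integrable fun ξ => e * v ξ := hv.const_mul e
  have h12 : Integrable fun ξ => c * w (l * ξ) + d * u ξ := h1.add h2
  rw [integral_add h12.integrableOn h3.integrableOn,
    integral_add h1.integrableOn h2.integrableOn,
    integral_const_mul, integral_const_mul, integral_const_mul]
  rw [show (∫ ξ in Iic x, w (l * ξ)) = primIic (fun ξ => w (l * ξ)) x from rfl,
    primIic_comp_mul hl]
  rfl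

lemma integral_ofReal'' {μ : MeasureTheory.Measure ℝ} {f : ℝ → ℝ} :
    ∫ x, ((f x : ℝ) : ℂ) ∂μ = ((∫ x, f x ∂μ : ℝ) : ℂ) := integral_ofReal



/-- The second iterated invariant distribution
`D²(f) = ∫ x, ∫_{-∞}^x ∫_{-∞}^{ξ₁} (f - D⁰(f)χ₀ - D¹(f)χ₁)(ξ₀) dξ₀ dξ₁ dx`. -/
noncomputable def heisD₂ (χ₀ χ₁ : ℝ → ℝ) (f : ℝ → ℂ) : ℂ :=
  ∫ x : ℝ, ∫ ξ₁ in Set.Iic x, ∫ ξ₀ in Set.Iic ξ₁,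
    (f ξ₀ - heisD₀ f * (χ₀ ξ₀ : ℂ) - heisD₁ χ₀ f * (χ₁ ξ₀ : ℂ))

/-- The coefficient `c_{2,j}(λ) = ∫ x, ∫_{-∞}^x ∫_{-∞}^{ξ₁}
(λ^{j+1} χ_j(λ ξ₀) - χ_j(ξ₀)) dξ₀ dξ₁ dx`. -/
noncomputable def heisC₂ (l : ℝ) (j : ℕ) (χ : ℝ → ℝ) : ℝ :=
  ∫ x : ℝ, ∫ ξ₁ in Set.Iic x, ∫ ξ₀ in Set.Iic ξ₁,
    (l ^ (j + 1) * χ (l * ξ₀) - χ ξ₀)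

/-- Action of the Heisenberg automorphism on the second iterated invariant distribution:
`D²(f_λ) = λ^{-5/2} D²(f) + c_{2,0}(λ) λ^{-1/2} D⁰(f) + c_{2,1}(λ) λ^{-3/2} D¹(f)`. -/
theorem stmt_14 (l : ℝ) (hl : 0 < l)
    (χ₀ : ℝ → ℝ) (hχ₀s : ContDiff ℝ (⊤ : ℕ∞) χ₀) (hχ₀c : HasCompactSupport χ₀)
    (hχ₀e : ∀ x : ℝ, χ₀ (-x) = χ₀ x) (hχ₀i : (∫ x : ℝ, χ₀ x) = 1)
    (χ₁ : ℝ → ℝ) (hχ₁s : ContDiff ℝ (⊤ : ℕ∞) χ₁) (hχ₁c : HasCompactSupport χ₁)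
    (hχ₁i : (∫ x : ℝ, χ₁ x) = 0)
    (hχ₁ii : (∫ x : ℝ, ∫ ξ in Set.Iic x, χ₁ ξ) = 1)
    (f : ℝ → ℂ) (hfs : ContDiff ℝ (⊤ : ℕ∞) f) (hfc : HasCompactSupport f) :
    heisD₂ χ₀ χ₁ (heisAct l f)
      = ((l ^ (-(5 : ℝ) / 2) : ℝ) : ℂ) * heisD₂ χ₀ χ₁ f
        + (heisC₂ l 0 χ₀ : ℂ) * ((l ^ (-(1 : ℝ) / 2) : ℝ) : ℂ) * heisD₀ f
        + (heisC₂ l 1 χ₁ : ℂ) * ((l ^ (-(3 : ℝ) / 2) : ℝ) : ℂ) * heisD₁ χ₀ f := by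
  have hl0 : l ≠ 0 := hl.ne'
  have hκ0 : (l : ℂ) ≠ 0 := by exact_mod_cast hl0
  set ι : ℂ := ((l⁻¹ : ℝ) : ℂ) with hι
  have hι' : ι = (l : ℂ)⁻¹ := by rw [hι]; push_cast; ring
  set α : ℂ := ((l ^ ((1 : ℝ) / 2) : ℝ) : ℂ) with hα
  set a : ℂ := heisD₀ f with ha
  set b : ℂ := heisD₁ χ₀ f with hb
  set c₀ : ℝ → ℂ := fun x => ((χ₀ x : ℝ) : ℂ) with hc₀def
  set c₁ : ℝ → ℂ := fun x => ((χ₁ x : ℝ) : ℂ) with hc₁def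
  -- basic regularity
  have hfcont : Continuous f := hfs.continuous
  have hfint : Integrable f := hfcont.integrable_of_hasCompactSupport hfc
  have hc₀cont : Continuous c₀ := Complex.continuous_ofReal.comp hχ₀s.continuous
  have hc₀cs : HasCompactSupport c₀ := hχ₀c.comp_left (g := Complex.ofReal) Complex.ofReal_zero
  have hc₀int : Integrable c₀ := hc₀cont.integrable_of_hasCompactSupport hc₀cs
  have hc₁cont : Continuous c₁ := Complex.continuous_ofReal.comp hχ₁s.continuous
  have hc₁cs : HasCompactSupport c₁ := hχ₁c.comp_left (g := Complex.ofReal) Complex.ofReal_zero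
  have hc₁int : Integrable c₁ := hc₁cont.integrable_of_hasCompactSupport hc₁cs
  have hc₀I : (∫ x : ℝ, c₀ x) = 1 := by
    simp only [hc₀def]; rw [integral_ofReal'', hχ₀i]; norm_num
  have hc₁I : (∫ x : ℝ, c₁ x) = 0 := by
    simp only [hc₁def]; rw [integral_ofReal'', hχ₁i]; norm_num
  -- the good functions g₁ and g
  set g₁ : ℝ → ℂ := fun x => f x - a * c₀ x with hg₁def
  set g : ℝ → ℂ := fun x => g₁ x - b * c₁ x with hgdef
  have hg₁cont : Continuous g₁ := hfcont.sub (continuous_const.mul hc₀cont)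
  have hg₁cs : HasCompactSupport g₁ :=
    hfc.comp₂_left (hc₀cs.mul_left : HasCompactSupport fun x => a * c₀ x) (sub_zero 0)
  have hg₁int : Integrable g₁ := hfint.sub (hc₀int.const_mul a)
  have hg₁I : (∫ x : ℝ, g₁ x) = 0 := by
    simp only [hg₁def]
    rw [integral_sub hfint (hc₀int.const_mul a), integral_const_mul, hc₀I, ha, heisD₀]
    ring
  have hgcont : Continuous g := hg₁cont.sub (continuous_const.mul hc₁cont)
  have hgcs : HasCompactSupport g :=
    hg₁cs.comp₂_left (hc₁cs.mul_left : HasCompactSupport fun x => b * c₁ x) (sub_zero 0)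
  have hgint : Integrable g := hg₁int.sub (hc₁int.const_mul b)
  have hgI : (∫ x : ℝ, g x) = 0 := by
    simp only [hgdef]
    rw [integral_sub hg₁int (hc₁int.const_mul b), integral_const_mul, hg₁I, hc₁I]
    ring
  obtain ⟨hPg₁cont, hPg₁cs, hPg₁int⟩ := primIic_ccs hg₁cont hg₁cs hg₁I
  obtain ⟨hPc₁cont, hPc₁cs, hPc₁int⟩ := primIic_ccs hc₁cont hc₁cs hc₁I
  obtain ⟨hPgcont, hPgcs, hPgint⟩ := primIic_ccs hgcont hgcs hgI
  have hbI : (∫ x : ℝ, primIic g₁ x) = b := by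
    rw [hb, heisD₁]; simp only [primIic, hg₁def, hc₀def, ha]
  have hPc₁I : (∫ x : ℝ, primIic c₁ x) = 1 := by
    have h : ∀ x : ℝ, primIic c₁ x = ((∫ ξ in Iic x, χ₁ ξ : ℝ) : ℂ) := fun x => by
      simp only [primIic, hc₁def]; exact integral_ofReal''
    simp only [h]
    rw [integral_ofReal'', hχ₁ii]; norm_num
  have hPgeq : ∀ x : ℝ, primIic g x = primIic g₁ x - b * primIic c₁ x := fun x => by
    simp only [primIic, hgdef]
    rw [integral_sub hg₁int.integrableOn ((hc₁int.const_mul b).integrableOn), integral_const_mul]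
  have hPgI : (∫ x : ℝ, primIic g x) = 0 := by
    simp only [hPgeq]
    rw [integral_sub hPg₁int (hPc₁int.const_mul b), integral_const_mul, hbI, hPc₁I]
    ring
  obtain ⟨hPPgcont, hPPgcs, hPPgint⟩ := primIic_ccs hPgcont hPgcs hPgI
  have hD2f : (∫ x : ℝ, primIic (primIic g) x) = heisD₂ χ₀ χ₁ f := by
    rw [heisD₂]; simp only [primIic, hgdef, hg₁def, hc₀def, hc₁def, ha, hb]
  -- the correction functions u₀ and u₁
  set u₀ : ℝ → ℂ := fun x => (l : ℂ) * c₀ (l * x) - c₀ x with hu₀def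
  set u₁ : ℝ → ℂ := fun x => (l : ℂ) ^ 2 * c₁ (l * x) - c₁ x with hu₁def
  have hc₀lcont : Continuous fun x => c₀ (l * x) :=
    hc₀cont.comp (continuous_const.mul continuous_id)
  have hc₀lcs : HasCompactSupport fun x => c₀ (l * x) := by
    simpa [smul_eq_mul] using hc₀cs.comp_smul (c := l) hl0
  have hc₀lint : Integrable fun x => c₀ (l * x) := hc₀int.comp_mul_left' hl0
  have hc₁lcont : Continuous fun x => c₁ (l * x) :=
    hc₁cont.comp (continuous_const.mul continuous_id)
  have hc₁lcs : HasCompactSupport fun x => c₁ (l * x) := by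
    simpa [smul_eq_mul] using hc₁cs.comp_smul (c := l) hl0
  have hc₁lint : Integrable fun x => c₁ (l * x) := hc₁int.comp_mul_left' hl0
  have hu₀cont : Continuous u₀ := (continuous_const.mul hc₀lcont).sub hc₀cont
  have hu₀cs : HasCompactSupport u₀ :=
    (hc₀lcs.mul_left : HasCompactSupport fun x => (l:ℂ) * c₀ (l * x)).comp₂_left hc₀cs (sub_zero 0)
  have hu₀int : Integrable u₀ := (hc₀lint.const_mul _).sub hc₀int
  have hu₁cont : Continuous u₁ := (continuous_const.mul hc₁lcont).sub hc₁cont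
  have hu₁cs : HasCompactSupport u₁ :=
    (hc₁lcs.mul_left : HasCompactSupport fun x => (l:ℂ)^2 * c₁ (l * x)).comp₂_left hc₁cs (sub_zero 0)
  have hu₁int : Integrable u₁ := (hc₁lint.const_mul _).sub hc₁int
  have hu₀I : (∫ x : ℝ, u₀ x) = 0 := by
    simp only [hu₀def]
    rw [integral_sub (hc₀lint.const_mul _) hc₀int, integral_const_mul,
      integral_comp_mul_of_pos c₀ hl, hc₀I]
    push_cast
    field_simp
    norm_num
  have hu₁I : (∫ x : ℝ, u₁ x) = 0 := by
    simp only [hu₁def]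
    rw [integral_sub (hc₁lint.const_mul _) hc₁int, integral_const_mul,
      integral_comp_mul_of_pos c₁ hl, hc₁I]
    ring
  obtain ⟨hPu₀cont, hPu₀cs, hPu₀int⟩ := primIic_ccs hu₀cont hu₀cs hu₀I
  obtain ⟨hPu₁cont, hPu₁cs, hPu₁int⟩ := primIic_ccs hu₁cont hu₁cs hu₁I
  -- pointwise formulas for the primitives of u₀, u₁
  have hPu₀eq : ∀ x : ℝ, primIic u₀ x = primIic c₀ (l * x) - primIic c₀ x := fun x => by
    simp only [primIic, hu₀def]
    rw [integral_sub ((hc₀lint.const_mul _).integrableOn) hc₀int.integrableOn,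
      integral_const_mul,
      show (∫ ξ in Iic x, c₀ (l * ξ)) = primIic (fun ξ => c₀ (l * ξ)) x from rfl,
      primIic_comp_mul hl]
    have : (l : ℂ) * ((l⁻¹ : ℝ) : ℂ) = 1 := by push_cast; field_simp
    rw [← mul_assoc, this, one_mul]
    rfl
  have hPu₁eq : ∀ x : ℝ, primIic u₁ x = (l:ℂ) * primIic c₁ (l * x) - primIic c₁ x := fun x => by
    simp only [primIic, hu₁def]
    rw [integral_sub ((hc₁lint.const_mul _).integrableOn) hc₁int.integrableOn,
      integral_const_mul,
      show (∫ ξ in Iic x, c₁ (l * ξ)) = primIic (fun ξ => c₁ (l * ξ)) x from rfl,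
      primIic_comp_mul hl]
    have h2 : (l : ℂ)^2 * (((l⁻¹ : ℝ) : ℂ) * primIic c₁ (l*x)) = (l:ℂ) * primIic c₁ (l*x) := by
      push_cast; field_simp
    rw [h2]
    rfl
  -- oddness of primIic u₀, via evenness of χ₀
  have hPc₀refl : ∀ y : ℝ, primIic c₀ (-y) = 1 - primIic c₀ y := fun y => by
    have e1 : primIic c₀ (-y) = ∫ ξ in Iic (-y), c₀ (-ξ) := by
      simp only [primIic]
      refine (setIntegral_congr_fun measurableSet_Iic fun t _ => ?_).symm
      simp only [hc₀def, hχ₀e]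
    have e2 : primIic c₀ (-y) = ∫ ξ in Ioi y, c₀ ξ := by
      rw [e1, integral_comp_neg_Iic, neg_neg]
    have h2 := intervalIntegral.integral_Iic_add_Ioi (b := y)
      hc₀int.integrableOn hc₀int.integrableOn
    rw [hc₀I] at h2
    rw [e2]
    simp only [primIic]
    linear_combination h2
  have hPu₀odd : ∀ x : ℝ, primIic u₀ (-x) = - primIic u₀ x := fun x => by
    rw [hPu₀eq, hPu₀eq, show l * -x = -(l * x) by ring, hPc₀refl, hPc₀refl]
    ring
  have hPu₀I : (∫ x : ℝ, primIic u₀ x) = 0 := by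
    have h1 : (∫ x : ℝ, primIic u₀ (-x)) = ∫ x : ℝ, primIic u₀ x :=
      integral_neg_eq_self (primIic u₀) volume
    simp only [hPu₀odd] at h1
    rw [integral_neg] at h1
    linear_combination (-1/2 : ℂ) * h1
  have hPu₁I : (∫ x : ℝ, primIic u₁ x) = 0 := by
    simp only [hPu₁eq]
    have i1 : Integrable fun x => (l:ℂ) * primIic c₁ (l * x) :=
      (hPc₁int.comp_mul_left' hl0).const_mul _
    rw [integral_sub i1 hPc₁int, integral_const_mul,
      integral_comp_mul_of_pos (primIic c₁) hl, hPc₁I]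
    push_cast
    field_simp
    norm_num
  obtain ⟨hPPu₀cont, hPPu₀cs, hPPu₀int⟩ := primIic_ccs hPu₀cont hPu₀cs hPu₀I
  obtain ⟨hPPu₁cont, hPPu₁cs, hPPu₁int⟩ := primIic_ccs hPu₁cont hPu₁cs hPu₁I
  -- the coefficients, complexified
  have hC₀ : ((heisC₂ l 0 χ₀ : ℝ) : ℂ) = ∫ x : ℝ, primIic (primIic u₀) x := by
    rw [heisC₂, ← integral_ofReal'']
    simp only [primIic, hu₀def, hc₀def]
    congr 1; funext x
    rw [← integral_ofReal'']
    congr 1; funext ξ₁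
    rw [← integral_ofReal'']
    congr 1; funext ξ₀
    push_cast
    ring
  have hC₁ : ((heisC₂ l 1 χ₁ : ℝ) : ℂ) = ∫ x : ℝ, primIic (primIic u₁) x := by
    rw [heisC₂, ← integral_ofReal'']
    simp only [primIic, hu₁def, hc₁def]
    congr 1; funext x
    rw [← integral_ofReal'']
    congr 1; funext ξ₁
    rw [← integral_ofReal'']
    congr 1; funext ξ₀
    push_cast
    ring
  -- scaling of D₀
  have hD₀l : heisD₀ (heisAct l f) = α * (ι * a) := by
    rw [heisD₀]
    simp only [heisAct, ← hα]
    rw [integral_const_mul, integral_comp_mul_of_pos f hl, ha, heisD₀, hι]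
  -- scaling of D₁
  have key₁ : ∀ ξ : ℝ, heisAct l f ξ - heisD₀ (heisAct l f) * ((χ₀ ξ : ℝ) : ℂ)
      = α * g₁ (l * ξ) + (α * ι * a) * u₀ ξ + 0 * u₀ ξ := fun ξ => by
    rw [hD₀l]
    simp only [heisAct, hg₁def, hu₀def, hc₀def, ← hα, hι]
    push_cast
    field_simp
    ring
  have hD₁l : heisD₁ χ₀ (heisAct l f) = α * (ι * (ι * b)) := by
    rw [heisD₁]
    simp only [key₁]
    have hinner : ∀ x : ℝ,
        (∫ ξ in Iic x, (α * g₁ (l * ξ) + (α * ι * a) * u₀ ξ + 0 * u₀ ξ))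
          = α * (ι * primIic g₁ (l * x)) + (α * ι * a) * primIic u₀ x
              + 0 * primIic u₀ x := fun x =>
      primIic_comb hl hg₁int hu₀int hu₀int α (α * ι * a) 0 x
    simp only [hinner]
    have i1 : Integrable fun x => α * (ι * primIic g₁ (l * x)) :=
      ((hPg₁int.comp_mul_left' hl0).const_mul ι).const_mul α
    have i2 : Integrable fun x => (α * ι * a) * primIic u₀ x := hPu₀int.const_mul _
    have i3 : Integrable fun x => (0 : ℂ) * primIic u₀ x := hPu₀int.const_mul _
    have i12 : Integrable fun x => α * (ι * primIic g₁ (l * x)) + (α * ι * a) * primIic u₀ x :=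
      i1.add i2
    rw [integral_add i12 i3, integral_add i1 i2, integral_const_mul,
      integral_const_mul, integral_const_mul, integral_const_mul,
      integral_comp_mul_of_pos (primIic g₁) hl, hbI, hPu₀I, hι]
    ring
  -- the main decomposition
  have key₂ : ∀ ξ : ℝ,
      heisAct l f ξ - heisD₀ (heisAct l f) * ((χ₀ ξ : ℝ) : ℂ)
          - heisD₁ χ₀ (heisAct l f) * ((χ₁ ξ : ℝ) : ℂ)
        = α * g (l * ξ) + (α * ι * a) * u₀ ξ + (α * ι * ι * b) * u₁ ξ := fun ξ => by
    rw [hD₀l, hD₁l]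
    simp only [heisAct, hgdef, hg₁def, hu₀def, hu₁def, hc₀def, hc₁def, ← hα, hι]
    push_cast
    field_simp
    ring
  have hmain : heisD₂ χ₀ χ₁ (heisAct l f)
      = α * ι * (ι * (ι * heisD₂ χ₀ χ₁ f))
        + (α * ι * a) * (∫ x : ℝ, primIic (primIic u₀) x)
        + (α * ι * ι * b) * (∫ x : ℝ, primIic (primIic u₁) x) := by
    rw [heisD₂]
    simp only [key₂]
    have hinner : ∀ ξ₁ : ℝ,
        (∫ ξ₀ in Iic ξ₁, (α * g (l * ξ₀) + (α * ι * a) * u₀ ξ₀ + (α * ι * ι * b) * u₁ ξ₀))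
          = α * (ι * primIic g (l * ξ₁)) + (α * ι * a) * primIic u₀ ξ₁
              + (α * ι * ι * b) * primIic u₁ ξ₁ := fun ξ₁ =>
      primIic_comb hl hgint hu₀int hu₁int α (α * ι * a) (α * ι * ι * b) ξ₁
    simp only [hinner]
    have hmid : ∀ x : ℝ,
        (∫ ξ₁ in Iic x, (α * (ι * primIic g (l * ξ₁)) + (α * ι * a) * primIic u₀ ξ₁
            + (α * ι * ι * b) * primIic u₁ ξ₁))
          = (α * ι) * (ι * primIic (primIic g) (l * x)) + (α * ι * a) * primIic (primIic u₀) x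
              + (α * ι * ι * b) * primIic (primIic u₁) x := fun x => by
      have h := primIic_comb hl hPgint hPu₀int hPu₁int (α * ι) (α * ι * a) (α * ι * ι * b) x
      rw [← h]
      simp only [primIic]
      congr 1
      funext ξ₁
      ring
    simp only [hmid]
    have i1 : Integrable fun x => (α * ι) * (ι * primIic (primIic g) (l * x)) :=
      ((hPPgint.comp_mul_left' hl0).const_mul ι).const_mul _
    have i2 : Integrable fun x => (α * ι * a) * primIic (primIic u₀) x := hPPu₀int.const_mul _
    have i3 : Integrable fun x => (α * ι * ι * b) * primIic (primIic u₁) x :=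
      hPPu₁int.const_mul _
    have i12 : Integrable fun x => (α * ι) * (ι * primIic (primIic g) (l * x))
        + (α * ι * a) * primIic (primIic u₀) x := i1.add i2
    rw [integral_add i12 i3, integral_add i1 i2, integral_const_mul,
      integral_const_mul, integral_const_mul, integral_const_mul,
      integral_comp_mul_of_pos (primIic (primIic g)) hl, hD2f, hι]
  -- powers of l
  have r1 : l ^ ((1:ℝ)/2) * l⁻¹ = l ^ (-(1:ℝ)/2) := by
    rw [← Real.rpow_neg_one l, ← Real.rpow_add hl]
    norm_num
  have r2 : l ^ ((1:ℝ)/2) * l⁻¹ * l⁻¹ = l ^ (-(3:ℝ)/2) := by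
    rw [← Real.rpow_neg_one l, ← Real.rpow_add hl, ← Real.rpow_add hl]
    norm_num
  have r3 : l ^ ((1:ℝ)/2) * l⁻¹ * l⁻¹ * l⁻¹ = l ^ (-(5:ℝ)/2) := by
    rw [← Real.rpow_neg_one l, ← Real.rpow_add hl, ← Real.rpow_add hl, ← Real.rpow_add hl]
    norm_num
  have e1 : α * ι = ((l ^ (-(1:ℝ)/2) : ℝ) : ℂ) := by
    rw [hα, hι, ← r1]; push_cast; ring
  have e2 : α * ι * ι = ((l ^ (-(3:ℝ)/2) : ℝ) : ℂ) := by
    rw [hα, hι, ← r2]; push_cast; ring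
  have e3 : α * ι * ι * ι = ((l ^ (-(5:ℝ)/2) : ℝ) : ℂ) := by
    rw [hα, hι, ← r3]; push_cast; ring
  rw [hmain, ← hC₀, ← hC₁, ← e1, ← e2, ← e3]
  ring
end
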